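/- arXiv:2409.07332 — 5 statements merged into one kernel-verified Lean document; each statement's English description precedes it below -/
import Mathlib

section
/- For every integer n ≥ 1, there exists a piecewise polynomial with 2(n−1) pieces, each of degree at most d, approximating log x on [2^{-n+1}, 1] with uniform error at most 2^{-d-1}/(d+1). -/
/-!
On `[a, 3a/2]` with `a > 0`, the Lagrange remainder of the degree-`d` Taylor polynomial of `log`
at `a` is `log⁽ᵈ⁺¹⁾(ξ) (x - a)^(d+1) / (d+1)! = ±(x - a)^(d+1) / ((d+1) ξ^(d+1))` with `ξ ≥ a`,
hence at most `((x - a)/a)^(d+1)/(d+1) ≤ 2^(-d-1)/(d+1)`. Each of the pieces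
`[2^(-i-1), 3·2^(-i-2)]` and `[3·2^(-i-2), 2^(-i)]` lies in such an interval `[a, 3a/2]` for
its left endpoint `a`.
-/

open Real Polynomial Set Nat

noncomputable def taylorPolynomial (f : ℝ → ℝ) (n : ℕ) (x₀ : ℝ) : ℝ[X] :=
  ∑ k ∈ Finset.range (n + 1), C (iteratedDeriv k f x₀ / k !) * (X - C x₀) ^ k

theorem degree_taylorPolynomial_le (f : ℝ → ℝ) (n : ℕ) (x₀ : ℝ) :
    (taylorPolynomial f n x₀).degree ≤ n := by
  refine (degree_sum_le _ _).trans (Finset.sup_le fun k hk => ?_)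
  compute_degree
  exact Nat.cast_le.mpr (Finset.mem_range_succ_iff.mp hk)

theorem eval_taylorPolynomial {f : ℝ → ℝ} {n : ℕ} {x₀ : ℝ} {s : Set ℝ}
    (hs : UniqueDiffOn ℝ s) (hx₀ : x₀ ∈ s) (hf : ContDiffAt ℝ n f x₀) (x : ℝ) :
    (taylorPolynomial f n x₀).eval x = taylorWithinEval f n s x₀ x := by
  simp only [taylorPolynomial, eval_finsetSum, eval_mul, eval_C, eval_pow, eval_sub, eval_X,
    taylor_within_apply, smul_eq_mul]
  refine Finset.sum_congr rfl fun k hk => ?_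
  rw [iteratedDerivWithin_eq_iteratedDeriv hs (hf.of_le ?_) hx₀]
  · ring
  · exact_mod_cast Finset.mem_range_succ_iff.mp hk

theorem taylorPolynomial_mean_remainder_lagrange {f : ℝ → ℝ} {s : Set ℝ} {n : ℕ} {x₀ x : ℝ}
    (hs : IsOpen s) (hf : ContDiffOn ℝ (n + 1) f s) (hsub : uIcc x₀ x ⊆ s) :
    ∃ x' ∈ uIcc x₀ x, f x - (taylorPolynomial f n x₀).eval x =
      iteratedDeriv (n + 1) f x' * (x - x₀) ^ (n + 1) / (n + 1)! := by
  have hf₀ : ContDiffAt ℝ n f x₀ :=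
    (hf.contDiffAt (hs.mem_nhds (hsub left_mem_uIcc))).of_le (by exact_mod_cast n.le_succ)
  rcases eq_or_ne x₀ x with rfl | hx
  · refine ⟨x₀, left_mem_uIcc, ?_⟩
    simp [eval_taylorPolynomial uniqueDiffOn_univ (mem_univ x₀) hf₀]
  obtain ⟨x', hx', hrem⟩ := taylor_mean_remainder_lagrange_iteratedDeriv hx (hf.mono hsub)
  refine ⟨x', uIoo_subset_uIcc_self hx', ?_⟩
  rw [eval_taylorPolynomial (uniqueDiffOn_uIcc hx) left_mem_uIcc hf₀, hrem]

theorem Real.iteratedDeriv_succ_log (k : ℕ) (x : ℝ) :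
    iteratedDeriv (k + 1) log x = (-1) ^ k * k ! / x ^ (k + 1) := by
  rw [iteratedDeriv_succ', deriv_log', iteratedDeriv_eq_iterate, iter_deriv_inv,
    show (-1 - k : ℤ) = -((k + 1 : ℕ) : ℤ) by push_cast; ring, zpow_neg, zpow_natCast,
    div_eq_mul_inv]

theorem abs_log_sub_eval_taylorPolynomial_le (n : ℕ) {a x : ℝ} (ha : 0 < a) (hax : a ≤ x) :
    |log x - (taylorPolynomial log n a).eval x| ≤ ((x - a) / a) ^ (n + 1) / (n + 1) := by
  have hsub : uIcc a x ⊆ {0}ᶜ := fun y hy => (ha.trans_le (uIcc_of_le hax ▸ hy).1).ne'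
  obtain ⟨y, hy, hrem⟩ :=
    taylorPolynomial_mean_remainder_lagrange isOpen_compl_singleton contDiffOn_log hsub
  rw [uIcc_of_le hax] at hy
  have hy0 : 0 < y := ha.trans_le hy.1
  have hxa : 0 ≤ x - a := sub_nonneg.mpr hax
  rw [hrem, Real.iteratedDeriv_succ_log]
  calc |(-1) ^ n * n ! / y ^ (n + 1) * (x - a) ^ (n + 1) / (n + 1)!|
      = (x - a) ^ (n + 1) / ((n + 1) * y ^ (n + 1)) := by
        rw [abs_div, abs_mul, abs_div, abs_mul, abs_pow, abs_neg, abs_one, one_pow, one_mul,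
          abs_of_pos (pow_pos hy0 _), abs_of_nonneg (pow_nonneg hxa _), Nat.abs_cast,
          Nat.abs_cast, factorial_succ]
        push_cast
        field_simp
    _ ≤ (x - a) ^ (n + 1) / ((n + 1) * a ^ (n + 1)) := by gcongr; exact hy.1
    _ = ((x - a) / a) ^ (n + 1) / (n + 1) := by rw [div_pow]; field_simp

theorem abs_log_sub_eval_taylorPolynomial_le_of_mem_Icc (n : ℕ) {a x : ℝ} (ha : 0 < a)
    (hx : x ∈ Icc a (3 / 2 * a)) :
    |log x - (taylorPolynomial log n a).eval x| ≤ 1 / ((n + 1) * 2 ^ (n + 1)) := by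
  have hr : (x - a) / a ≤ 1 / 2 := by rw [div_le_iff₀ ha]; linarith [hx.2]
  calc _ ≤ ((x - a) / a) ^ (n + 1) / (n + 1) := abs_log_sub_eval_taylorPolynomial_le n ha hx.1
    _ ≤ (1 / 2) ^ (n + 1) / (n + 1) := by
        gcongr
        exact div_nonneg (sub_nonneg.mpr hx.1) ha.le
    _ = 1 / ((n + 1) * 2 ^ (n + 1)) := by rw [div_pow, one_pow, div_div, mul_comm]

theorem log_piecewise_approx_general (n : ℕ) (d : ℕ) :
    ∃ p q : ℕ → Polynomial ℝ,
      (∀ i < n - 1, (p i).degree ≤ d ∧ (q i).degree ≤ d) ∧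
      ∀ i < n - 1,
        (∀ x ∈ Set.Icc ((2 : ℝ) ^ (-(i : ℝ) - 1)) (3 * (2 : ℝ) ^ (-(i : ℝ) - 2)),
          |Real.log x - (p i).eval x| ≤ 1 / (((d : ℝ) + 1) * 2 ^ (d + 1))) ∧
        (∀ x ∈ Set.Icc (3 * (2 : ℝ) ^ (-(i : ℝ) - 2)) ((2 : ℝ) ^ (-(i : ℝ))),
          |Real.log x - (q i).eval x| ≤ 1 / (((d : ℝ) + 1) * 2 ^ (d + 1))) := by
  refine ⟨fun i => taylorPolynomial log d (2 ^ (-(i : ℝ) - 1)),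
    fun i => taylorPolynomial log d (3 * 2 ^ (-(i : ℝ) - 2)),
    fun i _ => ⟨degree_taylorPolynomial_le .., degree_taylorPolynomial_le ..⟩, fun i _ => ?_⟩
  set t : ℝ := 2 ^ (-(i : ℝ) - 2)
  have ht : 0 < t := by positivity
  have htwo : (2 : ℝ) ^ (-(i : ℝ) - 1) = 2 * t := by
    rw [show -(i : ℝ) - 1 = 1 + (-(i : ℝ) - 2) by ring, rpow_add two_pos, rpow_one]
  have hfour : (2 : ℝ) ^ (-(i : ℝ)) = 4 * t := by
    rw [show -(i : ℝ) = (-(i : ℝ) - 2) + 2 by ring, rpow_add two_pos, rpow_two]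
    norm_num [t, mul_comm]
  simp only [htwo, hfour]
  refine ⟨fun x hx => ?_, fun x hx => ?_⟩ <;>
    exact abs_log_sub_eval_taylorPolynomial_le_of_mem_Icc d (by positivity)
      ⟨hx.1, by linarith [hx.2]⟩

/-- For `n ≥ 1` there is a `2(n−1)`-piece piecewise polynomial, each piece of degree
at most `d`, approximating `log x` on `[2^{-n+1}, 1]` with uniform error at most
`2^{-d-1}/(d+1)`. The pieces are `[2^{-i-1}, 3·2^{-i-2}]` and `[3·2^{-i-2}, 2^{-i}]`
for `i ∈ {0,…,n−2}`. -/
theorem log_piecewise_approx (n : ℕ) (hn : 1 ≤ n) (d : ℕ) :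
    ∃ p q : ℕ → Polynomial ℝ,
      (∀ i < n - 1, (p i).degree ≤ d ∧ (q i).degree ≤ d) ∧
      ∀ i < n - 1,
        (∀ x ∈ Set.Icc ((2 : ℝ) ^ (-(i : ℝ) - 1)) (3 * (2 : ℝ) ^ (-(i : ℝ) - 2)),
          |Real.log x - (p i).eval x| ≤ 1 / (((d : ℝ) + 1) * 2 ^ (d + 1))) ∧
        (∀ x ∈ Set.Icc (3 * (2 : ℝ) ^ (-(i : ℝ) - 2)) ((2 : ℝ) ^ (-(i : ℝ))),
          |Real.log x - (q i).eval x| ≤ 1 / (((d : ℝ) + 1) * 2 ^ (d + 1))) :=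
  log_piecewise_approx_general n d
end

section
/- Let δ_m = (1/𝒩²)·∑_{|k−E| > m} W_m(k−E)^{2} where W_m(x) = (sin(xπ/m)/(xπ/m))^m, E ∈ ℝ, the sum is over integers k with |k − E| > m, and 𝒩² ≥ c·√m for some constant c > 0. Then δ_m ≤ (2/(c√m))·(m/(2m−1))·π^{-2m}, hence δ_m = O(exp(−m)). -/
/-!
Write `W_m(x)² = (m/π)^(2m) · sin(xπ/m)^(2m) / x^(2m)`. On each side of `E` the offsets
`|k - E| > m` form a progression `x₀, x₀ + 1, …` with `m < x₀ ≤ m + 1`, so it suffices to bound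
such a one-sided sum by `m / ((2m - 1) π^(2m)) = ∫_m^∞ (m/(πt))^(2m) dt`. Every term but the
first is at most the integral of this envelope over the preceding unit interval. For `m ≥ 2`
the first term is at most the integral over `[m, x₀]`: with `s = x₀ - m`, the sine factor is
`sin(sπ/m)^(2m) ≤ s + s²`, while a second-order Bernoulli inequality shows that this integral is
at least `(m/π)^(2m) (s + s²) / x₀^(2m)`. For `m = 1` the sine factor `sin(x₀π)²` is common to
all terms; comparing the tail with the midpoint rule and using `sin(sπ)² ≤ 4s(1 - s)` closes
the bound.
-/

open Real

/-- The sinc-power window `W_m(x) = (sin(xπ/m)/(xπ/m))^m` (with `W_m(0) = 1`). -/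
noncomputable def sincPowWindow (m : ℕ) (x : ℝ) : ℝ :=
  if x = 0 then 1 else (Real.sin (x * Real.pi / m) / (x * Real.pi / m)) ^ m

open Finset

theorem sum_range_le_of_le_sub_succ {α : Type*} [AddCommGroup α] [PartialOrder α]
    [IsOrderedAddMonoid α] {f g : ℕ → α} (hfg : ∀ j, f j ≤ g j - g (j + 1))
    (hg : ∀ j, 0 ≤ g j) (N : ℕ) : ∑ j ∈ range N, f j ≤ g 0 :=
  calc ∑ j ∈ range N, f j ≤ ∑ j ∈ range N, (g j - g (j + 1)) :=
        sum_le_sum fun j _ ↦ hfg j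
    _ = g 0 - g N := sum_range_sub' g N
    _ ≤ g 0 := sub_le_self _ (hg N)

theorem one_add_mul_add_choose_two_mul_sq_le_pow {R : Type*} [CommRing R] [LinearOrder R]
    [IsStrictOrderedRing R] {t : R} (ht : 0 ≤ t) (n : ℕ) :
    1 + n * t + n.choose 2 * t ^ 2 ≤ (1 + t) ^ n := by
  induction n with
  | zero => simp
  | succ n ih =>
    rw [Nat.choose_succ_succ', Nat.choose_one_right, pow_succ (1 + t) n]
    push_cast
    nlinarith [mul_le_mul_of_nonneg_right ih (by linarith : (0 : R) ≤ 1 + t),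
      mul_nonneg (Nat.cast_nonneg (α := R) (n.choose 2)) (pow_nonneg ht 3)]

theorem one_div_pow_sub_one_div_pow_eq {a b : ℝ} (ha : a ≠ 0) (hb : b ≠ 0) (n : ℕ) :
    1 / a ^ n - 1 / b ^ n = ((b / a) ^ n - 1) / b ^ n := by
  rw [div_pow]; field_simp

theorem natCast_mul_sub_div_pow_succ_le (n : ℕ) {a b : ℝ} (ha : 0 < a) (hab : a ≤ b) :
    n * (b - a) / b ^ (n + 1) ≤ 1 / a ^ n - 1 / b ^ n := by
  have hb : 0 < b := ha.trans_le hab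
  have bernoulli := one_add_mul_le_pow (a := (b - a) / a)
    (by have := div_nonneg (sub_nonneg.2 hab) ha.le; linarith) n
  rw [show 1 + (b - a) / a = b / a by field_simp; ring] at bernoulli
  rw [one_div_pow_sub_one_div_pow_eq ha.ne' hb.ne', pow_succ', ← div_div]
  refine div_le_div_of_nonneg_right ?_ (by positivity)
  calc n * (b - a) / b ≤ n * (b - a) / a := by gcongr
    _ ≤ (b / a) ^ n - 1 := by rw [mul_div_assoc]; linarith

theorem natCast_mul_add_sq_div_pow_succ_le {n : ℕ} {a s : ℝ} (ha : 0 < a) (hs : 0 ≤ s)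
    (hn : 2 * a ≤ n + 1) :
    n * (s + s ^ 2) / (a + s) ^ (n + 1) ≤ 1 / a ^ n - 1 / (a + s) ^ n := by
  obtain ⟨t, ht, rfl⟩ : ∃ t, 0 ≤ t ∧ s = a * t :=
    ⟨s / a, by positivity, by field_simp⟩
  have hb : 0 < a + a * t := by positivity
  have bernoulli := one_add_mul_add_choose_two_mul_sq_le_pow ht n
  rw [Nat.cast_choose_two, show 1 + t = (a + a * t) / a by field_simp] at bernoulli
  rw [one_div_pow_sub_one_div_pow_eq ha.ne' hb.ne', pow_succ' (a + a * t), ← div_div]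
  refine div_le_div_of_nonneg_right ?_ (by positivity)
  rw [div_le_iff₀ hb]
  have hnn : (0 : ℝ) ≤ n * (n - 1) := by
    rcases n with _ | n
    · simp
    · push_cast; nlinarith
  calc n * (a * t + (a * t) ^ 2) ≤ (n * t + n * (n - 1) / 2 * t ^ 2) * (a + a * t) := by
        nlinarith [mul_nonneg (mul_nonneg hnn ha.le) (pow_nonneg ht 3),
          mul_nonneg (mul_nonneg n.cast_nonneg ha.le) (sq_nonneg t)]
    _ ≤ (((a + a * t) / a) ^ n - 1) * (a + a * t) := by gcongr; linarith

theorem sin_mul_pi_sq_le {s : ℝ} (hs₀ : 0 ≤ s) (hs₁ : s ≤ 1) :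
    sin (s * π) ^ 2 ≤ 4 * s * (1 - s) := by
  have hw : |π / 2 - s * π| ≤ π / 2 :=
    abs_le.2 ⟨by nlinarith [pi_pos], by nlinarith [pi_pos]⟩
  have jordan := mul_abs_le_abs_sin hw
  rw [← abs_of_pos (by positivity : 0 < 2 / π), ← abs_mul,
    show 2 / π * (π / 2 - s * π) = 1 - 2 * s by field_simp] at jordan
  have := sq_le_sq' (by linarith [abs_nonneg (1 - 2 * s)]) jordan
  rw [sq_abs, sq_abs, sin_pi_div_two_sub] at this
  nlinarith [sin_sq_add_cos_sq (s * π)]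

theorem sin_mul_pi_div_pow_le {m : ℕ} (hm : 2 ≤ m) {s : ℝ} (hs : 0 ≤ s) :
    sin (s * π / m) ^ (2 * m) ≤ s + s ^ 2 := by
  have hm' : (2 : ℝ) ≤ m := by exact_mod_cast hm
  rcases le_or_gt 1 (s + s ^ 2) with hbig | hsmall
  · exact (pow_mul (sin _) 2 m ▸ pow_le_one₀ (sq_nonneg _) (sin_sq_le_one _)).trans hbig
  have hs' : s < 5 / 8 := by nlinarith
  have hsπ : s * π / 2 < 1 := by nlinarith [pi_pos, pi_lt_d2]
  have hθ : s * π / m ≤ s * π / 2 := div_le_div_of_nonneg_left (by positivity) two_pos hm'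
  have hθ₁ : (s * π / m) ^ 2 ≤ 1 := by
    rw [sq_le_one_iff_abs_le_one, abs_of_nonneg (by positivity)]; linarith
  calc sin (s * π / m) ^ (2 * m) = (sin (s * π / m) ^ 2) ^ m := pow_mul _ 2 m
    _ ≤ ((s * π / m) ^ 2) ^ m := pow_le_pow_left₀ (sq_nonneg _) sin_sq_le_sq m
    _ ≤ ((s * π / m) ^ 2) ^ 2 := pow_le_pow_of_le_one (sq_nonneg _) hθ₁ hm
    _ ≤ (s * π / 2) ^ 4 := by rw [← pow_mul]; gcongr
    _ = s ^ 4 * (π ^ 4 / 16) := by ring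
    _ ≤ s ^ 4 * (3.15 ^ 4 / 16) := by gcongr; exact pi_lt_d2.le
    _ ≤ s + s ^ 2 := by nlinarith [pow_nonneg hs 3, mul_nonneg hs (sq_nonneg s)]

theorem sin_mul_pi_sq_mul_le_one {x : ℝ} (h₁ : 1 ≤ x) (h₂ : x ≤ 2) :
    sin (x * π) ^ 2 * (1 / x ^ 2 + 1 / (x + 1 / 2)) ≤ 1 := by
  obtain ⟨s, hs, rfl⟩ : ∃ s, 0 ≤ s ∧ x = 1 + s := ⟨x - 1, by linarith, by ring⟩
  rw [show (1 + s) * π = s * π + π by ring, sin_add_pi, neg_sq]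
  calc sin (s * π) ^ 2 * (1 / (1 + s) ^ 2 + 1 / (1 + s + 1 / 2))
      ≤ 4 * s * (1 - s) * (1 / (1 + s) ^ 2 + 1 / (1 + s + 1 / 2)) := by
        gcongr; exact sin_mul_pi_sq_le hs (by linarith)
    _ ≤ 1 := by
        rw [div_add_div _ _ (by positivity) (by positivity), mul_div_assoc',
          div_le_one (by positivity)]
        -- that is, `4s⁴ + 9s³ + 3s²/2 - 6s + 3/2 ≥ 0`, which is tight (`≈ 0.014`) near `s ≈ 0.38`
        nlinarith [sq_nonneg (s - 0.385), mul_nonneg hs (sq_nonneg (s - 0.385))]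

theorem sincPowWindow_neg (m : ℕ) (x : ℝ) : sincPowWindow m (-x) = sincPowWindow m x := by
  simp only [sincPowWindow, neg_eq_zero, neg_mul, neg_div, sin_neg, div_neg, neg_neg]

theorem sincPowWindow_sq {m : ℕ} (hm : m ≠ 0) {x : ℝ} (hx : x ≠ 0) :
    sincPowWindow m x ^ 2 = (m / π) ^ (2 * m) * sin (x * π / m) ^ (2 * m) / x ^ (2 * m) := by
  rw [sincPowWindow, if_neg hx, ← pow_mul, mul_comm m 2, div_pow, div_pow, mul_pow, div_pow]
  field_simp

theorem sincPowWindow_sq_le {m : ℕ} (hm : m ≠ 0) {x : ℝ} (hx : x ≠ 0) :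
    sincPowWindow m x ^ 2 ≤ (m / π) ^ (2 * m) / x ^ (2 * m) := by
  rw [sincPowWindow_sq hm hx, mul_div_right_comm]
  refine mul_le_of_le_one_right (div_nonneg (by positivity) (by rw [pow_mul]; positivity)) ?_
  rw [pow_mul]
  exact pow_le_one₀ (sq_nonneg _) (sin_sq_le_one _)

/-- `∫_y^∞ (m / (π t)) ^ (2 m) dt`, the integral of the envelope of `W_m²`. -/
noncomputable def envelopeTail (m : ℕ) (y : ℝ) : ℝ :=
  (m / π) ^ (2 * m) / ((2 * m - 1) * y ^ (2 * m - 1))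

theorem envelopeTail_nonneg {m : ℕ} (hm : m ≠ 0) {y : ℝ} (hy : 0 ≤ y) :
    0 ≤ envelopeTail m y := by
  have : (1 : ℝ) ≤ m := by exact_mod_cast Nat.one_le_iff_ne_zero.2 hm
  have : (0 : ℝ) ≤ 2 * m - 1 := by linarith
  unfold envelopeTail
  positivity

theorem envelopeTail_self {m : ℕ} (hm : m ≠ 0) :
    envelopeTail m m = m / (2 * m - 1) / π ^ (2 * m) := by
  have : (m : ℝ) ^ (2 * m) = m * m ^ (2 * m - 1) := by rw [← pow_succ']; congr 1; omega
  rw [envelopeTail, div_pow, this]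
  field_simp

theorem envelopeTail_sub {m n : ℕ} (hn : 2 * m = n + 1) (a b : ℝ) :
    envelopeTail m a - envelopeTail m b =
      (m / π) ^ (n + 1) / n * (1 / a ^ n - 1 / b ^ n) := by
  have hnR : (2 * m - 1 : ℝ) = n := by
    rw [sub_eq_iff_eq_add]; exact_mod_cast hn
  rw [envelopeTail, envelopeTail, hnR, show 2 * m - 1 = n by omega, hn]
  ring

theorem sincPowWindow_sq_le_envelopeTail_sub {m : ℕ} (hm : m ≠ 0) {y : ℝ} (hy : 0 < y) :
    sincPowWindow m (y + 1) ^ 2 ≤ envelopeTail m y - envelopeTail m (y + 1) := by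
  obtain ⟨n, hn⟩ : ∃ n, 2 * m = n + 1 := ⟨2 * m - 1, by omega⟩
  rw [envelopeTail_sub hn]
  calc sincPowWindow m (y + 1) ^ 2 ≤ (m / π) ^ (n + 1) / (y + 1) ^ (n + 1) := by
        rw [← hn]; exact sincPowWindow_sq_le hm (by positivity)
    _ = (m / π) ^ (n + 1) / n * (n * (y + 1 - y) / (y + 1) ^ (n + 1)) := by
        have : (n : ℝ) ≠ 0 := by norm_cast; omega
        field_simp; ring
    _ ≤ _ := by gcongr; exact natCast_mul_sub_div_pow_succ_le n hy (by linarith)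

theorem sincPowWindow_sq_le_envelopeTail_self_sub {m : ℕ} (hm : 2 ≤ m) {x : ℝ}
    (hx : m ≤ x) : sincPowWindow m x ^ 2 ≤ envelopeTail m m - envelopeTail m x := by
  obtain ⟨n, hn⟩ : ∃ n, 2 * m = n + 1 := ⟨2 * m - 1, by omega⟩
  have hm' : (2 : ℝ) ≤ m := by exact_mod_cast hm
  obtain ⟨s, hs, rfl⟩ : ∃ s, 0 ≤ s ∧ x = m + s := ⟨x - m, by linarith, by ring⟩
  have hperiod : sin ((m + s) * π / m) ^ (2 * m) = sin (s * π / m) ^ (2 * m) := by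
    rw [show (m + s) * π / m = s * π / m + π by field_simp; ring, sin_add_pi,
      (even_two_mul m).neg_pow]
  rw [envelopeTail_sub hn, sincPowWindow_sq (by omega) (by positivity), hperiod]
  calc (m / π) ^ (2 * m) * sin (s * π / m) ^ (2 * m) / (m + s) ^ (2 * m)
      ≤ (m / π) ^ (2 * m) * (s + s ^ 2) / (m + s) ^ (2 * m) := by
        gcongr; exact sin_mul_pi_div_pow_le hm hs
    _ = (m / π) ^ (n + 1) / n * (n * (s + s ^ 2) / (m + s) ^ (n + 1)) := by
        have : (n : ℝ) ≠ 0 := by norm_cast; omega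
        rw [hn]; field_simp
    _ ≤ _ := by
        gcongr
        exact natCast_mul_add_sq_div_pow_succ_le (by positivity) hs (by exact_mod_cast hn.le)

theorem sum_range_sincPowWindow_sq_le_of_two_le {m : ℕ} (hm : 2 ≤ m) {x₀ : ℝ}
    (hx₀ : m ≤ x₀) (N : ℕ) :
    ∑ j ∈ range N, sincPowWindow m (x₀ + j) ^ 2 ≤ m / (2 * m - 1) / π ^ (2 * m) := by
  have hm' : (0 : ℝ) < m := by positivity
  have hj : ∀ j : ℕ, 0 < x₀ + j := fun j ↦ by linarith [(j.cast_nonneg : (0 : ℝ) ≤ j)]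
  let p : ℕ → ℝ := fun | 0 => m | j + 1 => x₀ + j
  have hp : ∀ j, 0 ≤ p j := by
    rintro (_ | j)
    · exact hm'.le
    · exact (hj j).le
  rw [← envelopeTail_self (by omega)]
  refine sum_range_le_of_le_sub_succ (g := fun j ↦ envelopeTail m (p j)) ?_
    (fun j ↦ envelopeTail_nonneg (by omega) (hp j)) N
  rintro (_ | j)
  · simpa [p] using sincPowWindow_sq_le_envelopeTail_self_sub hm hx₀
  · simpa [p, add_assoc] using sincPowWindow_sq_le_envelopeTail_sub (by omega) (hj j)

theorem sum_range_sincPowWindow_one_sq_le {x₀ : ℝ} (h₁ : 1 ≤ x₀) (h₂ : x₀ ≤ 2) (N : ℕ) :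
    ∑ j ∈ range N, sincPowWindow 1 (x₀ + j) ^ 2 ≤ 1 / π ^ 2 := by
  set σ := sin (x₀ * π) ^ 2 / π ^ 2
  have hterm : ∀ j : ℕ, sincPowWindow 1 (x₀ + j) ^ 2 = σ / (x₀ + j) ^ 2 := fun j ↦ by
    rw [sincPowWindow_sq one_ne_zero (by positivity), Nat.cast_one, div_one, add_mul,
      sin_add_nat_mul_pi, mul_pow, ← pow_mul, Even.neg_one_pow ⟨j, by ring⟩]
    ring
  let g : ℕ → ℝ := fun
    | 0 => σ * (1 / x₀ ^ 2 + 1 / (x₀ + 1 / 2))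
    | j + 1 => σ / (x₀ + j + 1 / 2)
  have hg : ∀ j, 0 ≤ g j := by rintro (_ | j) <;> dsimp only [g] <;> positivity
  calc ∑ j ∈ range N, sincPowWindow 1 (x₀ + j) ^ 2 ≤ g 0 := by
        refine sum_range_le_of_le_sub_succ ?_ hg N
        rintro (_ | j)
        · simp only [hterm, g]; push_cast; exact le_of_eq (by ring)
        · have hy : 0 < x₀ + j := by linarith [(j.cast_nonneg : (0 : ℝ) ≤ j)]
          have midpoint :
              1 / (x₀ + j + 1) ^ 2 ≤ 1 / (x₀ + j + 1 / 2) - 1 / (x₀ + j + 1 + 1 / 2) := by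
            rw [div_sub_div _ _ (by positivity) (by positivity),
              div_le_div_iff₀ (by positivity) (by positivity)]
            nlinarith
          simp only [hterm, g]; push_cast
          rw [← add_assoc]
          calc σ / (x₀ + j + 1) ^ 2 = σ * (1 / (x₀ + j + 1) ^ 2) := by ring
            _ ≤ σ * (1 / (x₀ + j + 1 / 2) - 1 / (x₀ + j + 1 + 1 / 2)) := by gcongr
            _ = _ := by ring
    _ ≤ 1 / π ^ 2 := by
        simp only [g, σ]
        rw [div_mul_eq_mul_div]
        gcongr
        exact sin_mul_pi_sq_mul_le_one h₁ h₂

theorem sum_range_sincPowWindow_sq_le {m : ℕ} (hm : 1 ≤ m) {x₀ : ℝ} (h₁ : m ≤ x₀)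
    (h₂ : x₀ ≤ m + 1) (N : ℕ) :
    ∑ j ∈ range N, sincPowWindow m (x₀ + j) ^ 2 ≤ m / (2 * m - 1) / π ^ (2 * m) := by
  rcases hm.eq_or_lt with rfl | hm
  · norm_num at h₁ h₂ ⊢
    simpa using sum_range_sincPowWindow_one_sq_le h₁ (by linarith) N
  · exact sum_range_sincPowWindow_sq_le_of_two_le hm h₁ N

section IntTail

variable {f : ℝ → ℝ} {r C : ℝ}

theorem summable_and_tsum_int_right_tail_le (hf : ∀ x, 0 ≤ f x)
    (hC : ∀ x, r < x → x ≤ r + 1 → ∀ N, ∑ j ∈ range N, f (x + j) ≤ C) (E : ℝ) :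
    Summable (fun k : ℤ ↦ if r < k - E then f (k - E) else 0) ∧
      ∑' k : ℤ, (if r < k - E then f (k - E) else 0) ≤ C := by
  set k₀ : ℤ := ⌊E + r⌋ + 1
  have hk₀ : ∀ k : ℤ, r < k - E ↔ k₀ ≤ k := fun k ↦ by
    rw [Int.add_one_le_iff, Int.floor_lt]; constructor <;> intro h <;> linarith
  have hx₀ : r < k₀ - E := (hk₀ k₀).2 le_rfl
  have hx₀' : k₀ - E ≤ r + 1 := by
    have := Int.floor_le (E + r); push_cast [k₀]; linarith
  have hinj : Function.Injective (fun j : ℕ ↦ k₀ + j) := fun a b h ↦ by simpa using h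
  have hzero : ∀ k ∉ Set.range (fun j : ℕ ↦ k₀ + j),
      (if r < k - E then f (k - E) else 0) = 0 :=
    fun k hk ↦ if_neg fun h ↦ hk ⟨(k - k₀).toNat, by have := (hk₀ k).1 h; simp only; omega⟩
  have hcomp : ∀ j : ℕ,
      (if r < ((k₀ + j : ℤ) : ℝ) - E then f (((k₀ + j : ℤ) : ℝ) - E) else 0) =
        f (k₀ - E + j) := fun j ↦ by
    rw [if_pos ((hk₀ _).2 (by omega))]; push_cast; ring_nf
  have hsum := hC _ hx₀ hx₀'
  have hf' : ∀ j : ℕ, 0 ≤ f (k₀ - E + j) := fun j ↦ hf _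
  constructor
  · rw [← hinj.summable_iff hzero]
    simpa only [Function.comp_def, hcomp] using summable_of_sum_range_le hf' hsum
  · rw [← hinj.tsum_eq (Function.support_subset_iff'.2 hzero)]
    simpa only [hcomp] using Real.tsum_le_of_sum_range_le hf' hsum

theorem tsum_int_abs_tail_le (hf : ∀ x, 0 ≤ f x) (hf_neg : ∀ x, f (-x) = f x)
    (hC : ∀ x, r < x → x ≤ r + 1 → ∀ N, ∑ j ∈ range N, f (x + j) ≤ C) (E : ℝ) :
    ∑' k : ℤ, (if r < |(k : ℝ) - E| then f (k - E) else 0) ≤ 2 * C := by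
  set R : ℝ → ℤ → ℝ := fun e k ↦ if r < k - e then f (k - e) else 0
  have hR0 : ∀ e k, 0 ≤ R e k := fun e k ↦ by simp only [R]; split_ifs <;> simp [hf]
  obtain ⟨hR, hRC⟩ := summable_and_tsum_int_right_tail_le hf hC E
  obtain ⟨hL, hLC⟩ := summable_and_tsum_int_right_tail_le hf hC (-E)
  have hL' : Summable fun k ↦ R (-E) (-k) := (Equiv.neg ℤ).summable_iff.2 hL
  have hsplit : ∀ k : ℤ,
      (if r < |(k : ℝ) - E| then f (k - E) else 0) ≤ R E k + R (-E) (-k) := by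
    intro k
    have := hR0 E k
    have := hR0 (-E) (-k)
    split_ifs with h
    · rcases lt_abs.1 h with h | h
      · simp only [R, if_pos h]; linarith
      · have h' : r < ((-k : ℤ) : ℝ) - -E := by push_cast; linarith
        simp only [R, if_pos h']
        rw [show ((-k : ℤ) : ℝ) - -E = -(k - E) by push_cast; ring, hf_neg]; linarith
    · positivity
  have hnonneg : ∀ k : ℤ, 0 ≤ (if r < |(k : ℝ) - E| then f (k - E) else 0) := fun k ↦ by
    split_ifs <;> simp [hf]
  calc ∑' k : ℤ, (if r < |(k : ℝ) - E| then f (k - E) else 0)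
      ≤ ∑' k : ℤ, (R E k + R (-E) (-k)) :=
        (Summable.of_nonneg_of_le hnonneg hsplit (hR.add hL')).tsum_le_tsum hsplit (hR.add hL')
    _ = ∑' k, R E k + ∑' k, R (-E) k := by
        rw [hR.tsum_add hL']; congr 1; exact (Equiv.neg ℤ).tsum_eq (R (-E))
    _ ≤ 2 * C := by linarith

end IntTail

/-- Tail probability bound for B-spline boosted QPE: if `𝒩² ≥ c·√m` then
`δ_m = (1/𝒩²)·∑_{|k−E|>m} W_m(k−E)² ≤ (2/(c√m))·(m/(2m−1))·π^{-2m}`. -/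
theorem bspline_qpe_tail_bound (m : ℕ) (hm : 1 ≤ m) (E : ℝ) (c Nsq : ℝ)
    (hc : 0 < c) (hN : c * Real.sqrt m ≤ Nsq) :
    (1 / Nsq) *
      (∑' k : ℤ, if (m : ℝ) < |(k : ℝ) - E| then (sincPowWindow m ((k : ℝ) - E)) ^ 2 else 0) ≤
      2 / (c * Real.sqrt m) * ((m : ℝ) / (2 * m - 1)) / Real.pi ^ (2 * m) := by
  have hcm : 0 < c * √m := mul_pos hc (Real.sqrt_pos.2 (by exact_mod_cast hm))
  have htail := tsum_int_abs_tail_le (f := fun x ↦ sincPowWindow m x ^ 2)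
    (fun _ ↦ sq_nonneg _) (fun x ↦ by rw [sincPowWindow_neg])
    (fun x h₁ h₂ ↦ sum_range_sincPowWindow_sq_le hm h₁.le h₂) E
  have hnonneg : 0 ≤ ∑' k : ℤ,
      (if (m : ℝ) < |(k : ℝ) - E| then (sincPowWindow m ((k : ℝ) - E)) ^ 2 else 0) :=
    tsum_nonneg fun k ↦ by positivity
  calc _ ≤ 1 / (c * √m) * ∑' k : ℤ,
        (if (m : ℝ) < |(k : ℝ) - E| then (sincPowWindow m ((k : ℝ) - E)) ^ 2 else 0) := by
        gcongr
    _ ≤ 1 / (c * √m) * (2 * (m / (2 * m - 1) / π ^ (2 * m))) := by gcongr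
    _ = _ := by ring
end

section
/- For all real t with |t| ≤ π/2 and t ≠ 0, log(sin t / t) ≤ −t²/6, and consequently for m ≥ 1 and |x| ≤ m/2, (sin(xπ/m)/(xπ/m))^m ≤ exp(−x²π²/(6m)). -/
/-!
Euler's product `sin (π x) = π x ∏ₖ (1 - x² / k²)` together with `1 - u ≤ exp (-u)` bounds each
partial product, for `|x| ≤ 1`, by `exp (-x² ∑_{k ≤ n} 1 / k²)`. Letting `n → ∞` and using
`∑ 1 / k² = π² / 6` gives `sin t / t ≤ exp (-t² / 6)` for `|t| ≤ π`; the two claims follow by taking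
logarithms, resp. `m`-th powers at `t = x π / m`.
-/

open Real Filter Topology Finset

namespace Real

theorem hasSum_one_div_succ_sq : HasSum (fun j : ℕ => 1 / ((j : ℝ) + 1) ^ 2) (π ^ 2 / 6) := by
  simpa using (hasSum_nat_add_iff' 1).mpr hasSum_zeta_two

theorem prod_one_sub_sq_div_succ_sq_le_exp {x : ℝ} (hx : |x| ≤ 1) (n : ℕ) :
    ∏ j ∈ range n, (1 - x ^ 2 / ((j : ℝ) + 1) ^ 2) ≤
      exp (-(x ^ 2 * ∑ j ∈ range n, 1 / ((j : ℝ) + 1) ^ 2)) := by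
  rw [mul_sum, ← sum_neg_distrib, exp_sum]
  refine prod_le_prod (fun j _ => ?_) (fun j _ => ?_)
  · have hx2 : x ^ 2 ≤ 1 := by nlinarith [sq_abs x, abs_nonneg x]
    have hj : (1 : ℝ) ≤ ((j : ℝ) + 1) ^ 2 := one_le_pow₀ (by linarith [j.cast_nonneg (α := ℝ)])
    exact sub_nonneg.mpr (div_le_one_of_le₀ (hx2.trans hj) (by positivity))
  · rw [mul_one_div]
    exact one_sub_le_exp_neg _

theorem tendsto_prod_one_sub_sq_div_succ_sq {x : ℝ} (hx : x ≠ 0) :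
    Tendsto (fun n : ℕ => ∏ j ∈ range n, (1 - x ^ 2 / ((j : ℝ) + 1) ^ 2)) atTop
      (𝓝 (sin (π * x) / (π * x))) :=
  ((tendsto_euler_sin_prod x).div_const (π * x)).congr fun _ =>
    mul_div_cancel_left₀ _ (mul_ne_zero pi_ne_zero hx)

theorem sin_div_self_le_exp {t : ℝ} (ht : |t| ≤ π) : sin t / t ≤ exp (-t ^ 2 / 6) := by
  rcases eq_or_ne t 0 with rfl | ht0
  · simp
  set x := t / π
  have hπx : π * x = t := mul_div_cancel₀ t pi_ne_zero
  have hx : |x| ≤ 1 := by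
    rw [abs_div, abs_of_pos pi_pos]
    exact div_le_one_of_le₀ ht pi_pos.le
  have hx0 : x ≠ 0 := div_ne_zero ht0 pi_ne_zero
  have hexp := ((hasSum_one_div_succ_sq.tendsto_sum_nat.const_mul (x ^ 2)).neg).rexp
  have hle := le_of_tendsto_of_tendsto' (tendsto_prod_one_sub_sq_div_succ_sq hx0) hexp
    (prod_one_sub_sq_div_succ_sq_le_exp hx)
  rw [hπx] at hle
  refine hle.trans_eq ?_
  rw [← hπx]
  ring_nf

theorem sin_abs_div_abs (t : ℝ) : sin |t| / |t| = sin t / t := by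
  rcases abs_choice t with h | h <;> rw [h]
  rw [sin_neg, neg_div_neg_eq]

theorem sin_div_self_nonneg {t : ℝ} (ht : |t| ≤ π) : 0 ≤ sin t / t := by
  rw [← sin_abs_div_abs]
  exact div_nonneg (sin_nonneg_of_nonneg_of_le_pi (abs_nonneg t) ht) (abs_nonneg t)

theorem sin_div_self_pos {t : ℝ} (ht0 : t ≠ 0) (ht : |t| < π) : 0 < sin t / t := by
  rw [← sin_abs_div_abs]
  exact div_pos (sin_pos_of_pos_of_lt_pi (abs_pos.2 ht0) ht) (abs_pos.2 ht0)

theorem log_sin_div_self_le {t : ℝ} (ht0 : t ≠ 0) (ht : |t| < π) :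
    log (sin t / t) ≤ -t ^ 2 / 6 :=
  (log_le_iff_le_exp (sin_div_self_pos ht0 ht)).2 (sin_div_self_le_exp ht.le)

theorem sin_div_self_pow_le_exp {t : ℝ} (ht : |t| ≤ π) (m : ℕ) :
    (sin t / t) ^ m ≤ exp (-(m * t ^ 2) / 6) := by
  calc (sin t / t) ^ m ≤ exp (-t ^ 2 / 6) ^ m :=
        pow_le_pow_left₀ (sin_div_self_nonneg ht) (sin_div_self_le_exp ht) m
    _ = exp (-(m * t ^ 2) / 6) := by rw [← exp_nat_mul]; ring_nf

end Real

/-- `log(sin t / t) ≤ −t²/6` for `0 < |t| ≤ π/2`; consequently, for `m ≥ 1` and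
`|x| ≤ m/2`, `(sin(xπ/m)/(xπ/m))^m ≤ exp(−x²π²/(6m))`. -/
theorem log_sinc_le_and_gaussian_bound :
    (∀ t : ℝ, |t| ≤ Real.pi / 2 → t ≠ 0 →
      Real.log (Real.sin t / t) ≤ -t ^ 2 / 6) ∧
    (∀ m : ℕ, 1 ≤ m → ∀ x : ℝ, |x| ≤ (m : ℝ) / 2 →
      (Real.sin (x * Real.pi / m) / (x * Real.pi / m)) ^ m ≤
        Real.exp (-(x ^ 2 * Real.pi ^ 2) / (6 * m))) := by
  refine ⟨fun t ht ht0 => log_sin_div_self_le ht0 (ht.trans_lt (by linarith [pi_pos])),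
    fun m hm x hx => ?_⟩
  have hm0 : (0 : ℝ) < m := by exact_mod_cast hm
  have ht : |x * π / m| ≤ π := by
    rw [abs_div, abs_mul, abs_of_pos pi_pos, abs_of_pos hm0, div_le_iff₀ hm0]
    nlinarith [pi_pos, abs_nonneg x]
  convert sin_div_self_pow_le_exp ht m using 2
  field_simp
end

section
/- The m-th cardinal B-spline satisfies the explicit formula B_m(x) = (1/(m−1)!) · ∑_{p=0}^{m} (−1)^p · C(m,p) · max(0, x + m/2 − p)^{m−1} for all real x and integers m ≥ 1. -/
/-!
Convolving with `B_1` averages over a unit window, so `B_{m+1}(x) = ∫_{x-1/2}^{x+1/2} B_m`.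
With `Δ` the unit forward difference, the formula reads
`B_m(x) = Δ^m[t₊^{m-1}](x - m/2) / (m-1)!`; this is clear for `m = 1`, and the induction step
holds because integrating `Δ^n f` over a window of length `h` gives `Δ_h^{n+1} G` for an
antiderivative `G` of `f`, while `t₊^{k+1}/(k+1)` is an antiderivative of `t₊^k`.
The binomial expansion of `Δ^m` gives the explicit sum.
-/

open Real MeasureTheory

/-- The `m`-th cardinal B-spline: `B_1` is the indicator of `[−1/2, 1/2)` and
`B_m = B_1 ∗ B_{m−1}`. -/
noncomputable def cardinalBspline : ℕ → ℝ → ℝ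
  | 0, _ => 0
  | 1, x => if -(1 / 2 : ℝ) ≤ x ∧ x < (1 / 2 : ℝ) then 1 else 0
  | (m + 2), x => ∫ y : ℝ, cardinalBspline 1 y * cardinalBspline (m + 1) (x - y)

/-- Truncated power function `t₊^k`, with the convention `t₊^0 = [t ≥ 0]`. -/
noncomputable def truncPow (t : ℝ) (k : ℕ) : ℝ := if 0 ≤ t then t ^ k else 0

-- `Δ_[h] ^[n]` needs the space: `]^` is a token of the exterior power notation.
open scoped fwdDiff
open Finset Nat

lemma truncPow_succ (t : ℝ) (k : ℕ) : truncPow t (k + 1) = max t 0 ^ (k + 1) := by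
  unfold truncPow
  split_ifs with ht
  · rw [max_eq_left ht]
  · rw [max_eq_right (not_le.1 ht).le, zero_pow k.succ_ne_zero]

lemma intervalIntegrable_truncPow (k : ℕ) (a b : ℝ) :
    IntervalIntegrable (truncPow · k) volume a b := by
  have : (truncPow · k) = Set.indicator (Set.Ici 0) (· ^ k) := by
    ext t
    simp [truncPow, Set.indicator]
  rw [intervalIntegrable_iff, this]
  exact ((continuous_pow k).intervalIntegrable a b).def'.indicator measurableSet_Ici

lemma hasDerivWithinAt_truncPow_succ (k : ℕ) (t : ℝ) :
    HasDerivWithinAt (truncPow · (k + 1)) ((k + 1) * truncPow t k) (Set.Ioi t) t := by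
  rcases lt_or_ge t 0 with ht | ht
  · have hzero : (truncPow · (k + 1)) =ᶠ[nhds t] fun _ => 0 := by
      filter_upwards [Iio_mem_nhds ht] with s hs
      simp [truncPow, not_le.2 (show s < 0 from hs)]
    simpa [truncPow, not_le.2 ht] using
      ((hasDerivAt_const t (0 : ℝ)).congr_of_eventuallyEq hzero).hasDerivWithinAt
  · have hpow := (hasDerivAt_pow (k + 1) t).hasDerivWithinAt (s := Set.Ioi t)
    rw [truncPow, if_pos ht]
    push_cast at hpow ⊢
    refine hpow.congr (fun s hs => ?_) ?_ <;> simp only [truncPow]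
    · rw [if_pos (ht.trans hs.le)]
    · rw [if_pos ht]

lemma integral_truncPow (k : ℕ) (a b : ℝ) :
    ∫ t in a..b, truncPow t k = (truncPow b (k + 1) - truncPow a (k + 1)) / (k + 1) := by
  have hk : (k + 1 : ℝ) ≠ 0 := by positivity
  have hcont : Continuous fun t => truncPow t (k + 1) / (k + 1) := by
    simp_rw [truncPow_succ]
    fun_prop
  rw [intervalIntegral.integral_eq_sub_of_hasDeriv_right hcont.continuousOn
    (fun t _ => ((hasDerivWithinAt_truncPow_succ k t).div_const _).congr_deriv
      (by field_simp)) (intervalIntegrable_truncPow k a b), sub_div]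

theorem integral_fwdDiff_iter {E : Type*} [NormedAddCommGroup E] [NormedSpace ℝ E] {f G : ℝ → E}
    (hf : ∀ a b, IntervalIntegrable f volume a b)
    (hG : ∀ a b, ∫ t in a..b, f t = G b - G a) (h : ℝ) (n : ℕ) (a : ℝ) :
    ∫ t in a..a + h, Δ_[h] ^[n] f t = Δ_[h] ^[n + 1] G a := by
  induction n generalizing f G with
  | zero => simp [hG, fwdDiff]
  | succ n ih =>
    have hf_shift : ∀ a b, IntervalIntegrable (fun t => f (t + h)) volume a b := fun a b => by
      simpa using (hf (a + h) (b + h)).comp_add_right h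
    refine ih (fun a b => (hf_shift a b).sub (hf a b)) (fun a b => ?_)
    simp only [fwdDiff]
    rw [intervalIntegral.integral_sub (hf_shift a b) (hf a b),
      intervalIntegral.integral_comp_add_right, hG, hG]
    abel

theorem fwdDiff_iter_sub_eq_sum (f : ℝ → ℝ) (n : ℕ) (y : ℝ) :
    Δ_[1] ^[n] f (y - n) = ∑ p ∈ range (n + 1), (-1) ^ p * (n.choose p : ℝ) * f (y - p) := by
  rw [fwdDiff_iter_eq_sum_shift, ← sum_range_reflect]
  refine sum_congr rfl fun p hp => ?_
  have hpn : p ≤ n := Nat.lt_succ_iff.1 (mem_range.1 hp)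
  rw [Nat.add_sub_cancel, Nat.sub_sub_self hpn, Nat.choose_symm hpn, zsmul_eq_mul, nsmul_one,
    Nat.cast_sub hpn]
  push_cast
  ring_nf

theorem cardinalBspline_add_two (m : ℕ) (x : ℝ) :
    cardinalBspline (m + 2) x = ∫ u in (x - 1 / 2)..(x + 1 / 2), cardinalBspline (m + 1) u := by
  have hB1 (y : ℝ) : cardinalBspline 1 y * cardinalBspline (m + 1) (x - y) =
      (Set.Ico (-(1 / 2)) (1 / 2)).indicator (fun y => cardinalBspline (m + 1) (x - y)) y := by
    simp only [cardinalBspline, Set.indicator_apply, Set.mem_Ico]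
    split_ifs <;> simp
  rw [cardinalBspline]
  simp_rw [hB1]
  rw [integral_indicator measurableSet_Ico, integral_Ico_eq_integral_Ioo,
    ← integral_Ioc_eq_integral_Ioo, ← intervalIntegral.integral_of_le (by norm_num),
    intervalIntegral.integral_comp_sub_left, sub_neg_eq_add]

theorem cardinalBspline_one_eq_fwdDiff (x : ℝ) :
    cardinalBspline 1 x = Δ_[1] (truncPow · 0) (x - 1 / 2) := by
  simp only [cardinalBspline, fwdDiff, truncPow, pow_zero]
  split_ifs <;> grind

theorem cardinalBspline_succ_eq_fwdDiff_iter (n : ℕ) (x : ℝ) :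
    cardinalBspline (n + 1) x = Δ_[1] ^[n + 1] (truncPow · n) (x - (n + 1) / 2) / n ! := by
  induction n generalizing x with
  | zero => simpa using cardinalBspline_one_eq_fwdDiff x
  | succ n ih =>
    have hk : (n + 1 : ℝ) ≠ 0 := by positivity
    have hF := integral_fwdDiff_iter (G := (n + 1 : ℝ)⁻¹ • (truncPow · (n + 1)))
      (intervalIntegrable_truncPow n)
      (fun a b => by simp only [integral_truncPow, Pi.smul_apply, smul_eq_mul]; ring) 1 (n + 1)
    rw [cardinalBspline_add_two]
    simp_rw [ih]
    rw [intervalIntegral.integral_div, intervalIntegral.integral_comp_sub_right,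
      show x + 1 / 2 - (n + 1) / 2 = x - 1 / 2 - (n + 1) / 2 + 1 by ring, hF,
      fwdDiff_iter_const_smul, Pi.smul_apply, smul_eq_mul, factorial_succ,
      show x - 1 / 2 - (n + 1) / 2 = x - ((n + 1 : ℕ) + 1) / 2 by push_cast; ring]
    push_cast
    field_simp

/-- Explicit formula for the cardinal B-spline:
`B_m(x) = (1/(m−1)!) · ∑_{p=0}^{m} (−1)^p · C(m,p) · max(0, x + m/2 − p)^{m−1}`. -/
theorem cardinalBspline_explicit_formula (m : ℕ) (hm : 1 ≤ m) (x : ℝ) :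
    cardinalBspline m x =
      (1 / ((m - 1).factorial : ℝ)) *
        ∑ p ∈ Finset.range (m + 1),
          (-1 : ℝ) ^ p * (m.choose p : ℝ) * truncPow (x + (m : ℝ) / 2 - (p : ℝ)) (m - 1) := by
  obtain ⟨n, rfl⟩ := Nat.exists_eq_add_of_le' hm
  have hx : x - (n + 1) / 2 = x + ((n + 1 : ℕ) : ℝ) / 2 - (n + 1 : ℕ) := by push_cast; ring
  rw [cardinalBspline_succ_eq_fwdDiff_iter, hx, fwdDiff_iter_sub_eq_sum, Nat.add_sub_cancel,
    div_eq_inv_mul, one_div]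
end

section
/- Greedy segmentation is optimal: suppose for each dyadic-aligned segment [a, b) (with b − a a power of 2 and a divisible by b − a) a monotone feasibility predicate Feas([a,b)) is given, meaning Feas holds for a segment implies it holds for every dyadic-aligned subsegment. Then the partition of [0, N) (N a power of 2) produced by greedily choosing, from right to left, the largest feasible dyadic-aligned segment ending at the current right endpoint, has the minimum possible number of segments among all partitions of [0, N) into feasible dyadic-aligned segments. -/
/-- A dyadic-aligned segment `[a, a + L)`: `L` is a power of two dividing `a`. -/
def DyadicAligned (a L : ℕ) : Prop := (∃ l : ℕ, L = 2 ^ l) ∧ L ∣ a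

/-!
Dyadic-aligned segments form a laminar family: two of them are either disjoint or nested.
Hence a feasible segment `J` that contains a greedy cut point `c (k + 1)` in its interior
would contain the whole greedy segment `[c (k + 1), c k)` strictly; if `J` ends at `c k` this
contradicts greediness, and otherwise `J` contains the cut point `c k` in its interior and we
conclude by induction on `k`. So every greedy cut point is a cut point of any feasible
partition, and the greedy partition has the fewest segments.
-/

lemma pow_two_dvd_of_le {L M : ℕ} (hL : ∃ l, L = 2 ^ l) (hM : ∃ m, M = 2 ^ m) (h : L ≤ M) :
    L ∣ M := by
  obtain ⟨l, rfl⟩ := hL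
  obtain ⟨m, rfl⟩ := hM
  exact pow_dvd_pow 2 ((Nat.pow_le_pow_iff_right (by norm_num)).mp h)

lemma DyadicAligned.nested_of_overlap {x L y M : ℕ} (hJ : DyadicAligned x L)
    (hI : DyadicAligned y M) (hLM : L ≤ M) (hxy : x < y + M) (hyx : y < x + L) :
    y ≤ x ∧ x + L ≤ y + M := by
  have hdvd : L ∣ y := (pow_two_dvd_of_le hJ.1 hI.1 hLM).trans hI.2
  exact ⟨Nat.le_of_lt_add_of_dvd hyx hdvd hJ.2,
    Nat.le_of_lt_add_of_dvd (by omega) (dvd_add hJ.2 dvd_rfl)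
      (dvd_add hdvd (pow_two_dvd_of_le hJ.1 hI.1 hLM))⟩

lemma exists_succ_le_lt_of_lt_of_le {α : Type*} [LinearOrder α] {f : ℕ → α} {y : α} {S : ℕ}
    (h0 : y < f 0) (hS : f S ≤ y) : ∃ i < S, f (i + 1) ≤ y ∧ y < f i := by
  induction S with
  | zero => exact absurd hS (not_le.mpr h0)
  | succ S ih =>
    rcases le_or_gt (f S) y with hle | hlt
    · obtain ⟨i, hi, hfi⟩ := ih hle
      exact ⟨i, by omega, hfi⟩
    · exact ⟨S, by omega, hS, hlt⟩

lemma le_of_injOn_of_exists_eq {α : Type*} {f g : ℕ → α} {S S' : ℕ}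
    (hf : Set.InjOn f (Set.Iio S)) (h : ∀ k < S, ∃ i < S', g i = f k) : S ≤ S' := by
  classical
  calc S = ((Finset.range S).image f).card := by
        rw [Finset.card_image_of_injOn (by simpa using hf), Finset.card_range]
    _ ≤ ((Finset.range S').image g).card := Finset.card_le_card fun y hy => by
        obtain ⟨k, hk, rfl⟩ := Finset.mem_image.mp hy
        obtain ⟨i, hi, hgi⟩ := h k (Finset.mem_range.mp hk)
        exact Finset.mem_image.mpr ⟨i, Finset.mem_range.mpr hi, hgi⟩
    _ ≤ S' := Finset.card_image_le.trans (Finset.card_range S').le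

section Greedy

variable {Feas : ℕ → ℕ → Prop} {c : ℕ → ℕ} {S : ℕ}

theorem eq_greedy_cut_or_greedy_cut_lt
    (hc : ∀ j < S, c (j + 1) < c j ∧ DyadicAligned (c (j + 1)) (c j - c (j + 1)))
    (hgreedy : ∀ j < S, ∀ L', L' ≤ c j → c j - c (j + 1) < L' →
      DyadicAligned (c j - L') L' → ¬ Feas (c j - L') L')
    {x L : ℕ} (hJ : DyadicAligned x L) (hF : Feas x L)
    {k : ℕ} (hk : k < S) (hx : x ≤ c (k + 1)) (hxL : c (k + 1) < x + L) :
    x = c (k + 1) ∨ c k < x + L := by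
  obtain ⟨hlt, hI⟩ := hc k hk
  rcases le_total L (c k - c (k + 1)) with hLG | hGL
  · exact .inl (le_antisymm hx (hJ.nested_of_overlap hI hLG (by omega) hxL).1)
  · have hcover := (hI.nested_of_overlap hJ hGL hxL (by omega)).2
    rcases eq_or_ne x (c (k + 1)) with heq | hne
    · exact .inl heq
    refine .inr (lt_of_le_of_ne (by omega) fun hend => ?_)
    have hstart : c k - L = x := by omega
    exact hgreedy k hk L (by omega) (by omega) (hstart ▸ hJ) (hstart ▸ hF)

theorem eq_greedy_cut_of_feasible
    (hc : ∀ j < S, c (j + 1) < c j ∧ DyadicAligned (c (j + 1)) (c j - c (j + 1)))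
    (hgreedy : ∀ j < S, ∀ L', L' ≤ c j → c j - c (j + 1) < L' →
      DyadicAligned (c j - L') L' → ¬ Feas (c j - L') L')
    {x L : ℕ} (hJ : DyadicAligned x L) (hF : Feas x L)
    (hend : x + L ≤ c 0) {k : ℕ} (hk : k < S) (hx : x ≤ c (k + 1))
    (hxL : c (k + 1) < x + L) : x = c (k + 1) := by
  induction k with
  | zero =>
    exact (eq_greedy_cut_or_greedy_cut_lt hc hgreedy hJ hF hk hx hxL).resolve_right (by omega)
  | succ k ih =>
    refine (eq_greedy_cut_or_greedy_cut_lt hc hgreedy hJ hF hk hx hxL).resolve_right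
      fun hover => ?_
    have := (hc (k + 1) hk).1
    have := ih (by omega) (by omega) hover
    omega

end Greedy

theorem greedy_segmentation_optimal_general (N : ℕ)
    (Feas : ℕ → ℕ → Prop)
    -- the greedy partition, given by cut points `N = c 0 > c 1 > ⋯ > c S = 0`
    (c : ℕ → ℕ) (S : ℕ) (hc0 : c 0 = N)
    (hpart : ∀ j < S, c (j + 1) < c j ∧
      DyadicAligned (c (j + 1)) (c j - c (j + 1)) ∧
      Feas (c (j + 1)) (c j - c (j + 1)))
    -- greediness: no strictly larger feasible dyadic-aligned segment ends at `c j`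
    (hgreedy : ∀ j < S, ∀ L', L' ≤ c j → c j - c (j + 1) < L' →
      DyadicAligned (c j - L') L' → ¬ Feas (c j - L') L')
    -- an arbitrary competing partition
    (c' : ℕ → ℕ) (S' : ℕ) (hc'0 : c' 0 = N) (hc'S : c' S' = 0)
    (hpart' : ∀ j < S', c' (j + 1) < c' j ∧
      DyadicAligned (c' (j + 1)) (c' j - c' (j + 1)) ∧
      Feas (c' (j + 1)) (c' j - c' (j + 1))) :
    S ≤ S' := by
  have hanti : StrictAntiOn c (Set.Iic S) :=
    strictAntiOn_Iic_of_succ_lt fun m hm => (hpart m hm).1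
  have hanti' : StrictAntiOn c' (Set.Iic S') :=
    strictAntiOn_Iic_of_succ_lt fun m hm => (hpart' m hm).1
  have hcut : ∀ k < S, ∃ i < S', c' (i + 1) = c (k + 1) := by
    intro k hk
    have hlt0 : c (k + 1) < c' 0 :=
      hc'0 ▸ hc0 ▸ hanti (by simp) (by simpa using hk) (Nat.succ_pos k)
    obtain ⟨i, hi, hle, hlt⟩ := exists_succ_le_lt_of_lt_of_le hlt0 (hc'S ▸ Nat.zero_le _)
    obtain ⟨-, hJ, hF⟩ := hpart' i hi
    have hend : c' i ≤ c' 0 := hanti'.antitoneOn (by simp) (by simpa using hi.le) (Nat.zero_le i)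
    exact ⟨i, hi, eq_greedy_cut_of_feasible (fun j hj => ⟨(hpart j hj).1, (hpart j hj).2.1⟩)
      hgreedy hJ hF (by omega) hk hle (by omega)⟩
  refine le_of_injOn_of_exists_eq (f := fun k => c (k + 1)) (fun a ha b hb hab => ?_) hcut
  simpa using hanti.injOn (by simpa using ha) (by simpa using hb) hab

/-- Greedy segmentation is optimal: given a feasibility predicate on dyadic-aligned
segments that is downward-closed under taking dyadic-aligned subsegments, any
greedy partition of `[0, N)` (choosing, from right to left, the largest feasible
dyadic-aligned segment ending at the current right endpoint) uses the minimum
possible number of segments among all partitions into feasible dyadic-aligned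
segments. -/
theorem greedy_segmentation_optimal (N n : ℕ) (hN : N = 2 ^ n)
    (Feas : ℕ → ℕ → Prop)
    (mono : ∀ a L a' L', DyadicAligned a L → DyadicAligned a' L' →
      a ≤ a' → a' + L' ≤ a + L → Feas a L → Feas a' L')
    -- the greedy partition, given by cut points `N = c 0 > c 1 > ⋯ > c S = 0`
    (c : ℕ → ℕ) (S : ℕ) (hc0 : c 0 = N) (hcS : c S = 0)
    (hpart : ∀ j < S, c (j + 1) < c j ∧
      DyadicAligned (c (j + 1)) (c j - c (j + 1)) ∧
      Feas (c (j + 1)) (c j - c (j + 1)))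
    -- greediness: no strictly larger feasible dyadic-aligned segment ends at `c j`
    (hgreedy : ∀ j < S, ∀ L', L' ≤ c j → c j - c (j + 1) < L' →
      DyadicAligned (c j - L') L' → ¬ Feas (c j - L') L')
    -- an arbitrary competing partition
    (c' : ℕ → ℕ) (S' : ℕ) (hc'0 : c' 0 = N) (hc'S : c' S' = 0)
    (hpart' : ∀ j < S', c' (j + 1) < c' j ∧
      DyadicAligned (c' (j + 1)) (c' j - c' (j + 1)) ∧
      Feas (c' (j + 1)) (c' j - c' (j + 1))) :
    S ≤ S' :=
  greedy_segmentation_optimal_general N Feas c S hc0 hpart hgreedy c' S' hc'0 hc'S hpart'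
end
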